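/- Let F : ℝ^d → (nonempty compact convex subsets of ℝ^d) (d > 1) be usc, l-ROSL with l < 0, and L-Lipschitz with -l ≤ L ≤ -√2·l. Then the iteration x_{n+1} := x_n + (l/L²)(ȳ - Proj(ȳ, F(x_n))) satisfies dist(ȳ, F(x_{n+1})) ≤ (√(L² - l²)/L)·dist(ȳ, F(x_n)) for all n, and hence converges to a solution of ȳ ∈ F(x). -/

import Mathlib

/-!
Let `q` be the point of `F x_{n+1}` nearest to `ȳ` and `d` the unit vector from `q` to `ȳ`.
For `r ≥ 0`, the Lipschitz bound gives a point of `F (x_{n+1} + r d)` within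
`L ‖x_{n+1} + r d - x_n‖` of `p_n`, relaxed one-sided Lipschitzness brings it back into
`F x_{n+1}` while moving it by at most `l r` in the direction `d`, and the projection inequality
`dist(ȳ, F x_{n+1}) ≤ ⟪ȳ - k, d⟫` for `k ∈ F x_{n+1}` turns this into
`dist(ȳ, F x_{n+1}) ≤ ⟪ȳ - p_n, d⟫ + L ‖x_{n+1} + r d - x_n‖ + l r`.
Optimising over `r` is a planar problem whose value is at most `κ ‖ȳ - p_n‖` by Cauchy–Schwarz
for `(√(L² - l²), -l)`, a vector of length `L`. The distances thus decay geometrically, so do the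
steps `x_{n+1} - x_n`, and upper semicontinuity with closed values puts `ȳ` in `F` of the limit.
-/

open Metric Filter Topology RealInnerProductSpace

section Scalar

variable {l L a b G W D : ℝ}

theorem sq_sqrt_sq_sub_sq (hl : l < 0) (hlL : -l ≤ L) : √(L ^ 2 - l ^ 2) ^ 2 = L ^ 2 - l ^ 2 :=
  Real.sq_sqrt (by nlinarith)

-- `t ↦ L √(t² + b²) + l t` is minimal at `t = -l b / √(L² - l²)`, with minimum `√(L² - l²) b`
theorem le_of_forall_le_add_sqrt_of_le (hl : l < 0) (hlL : -l ≤ L) (hσ : 0 < √(L ^ 2 - l ^ 2))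
    (hb : 0 ≤ b) (ha : a ≤ -l * b / √(L ^ 2 - l ^ 2))
    (h : ∀ r ≥ 0, D ≤ G + L * √((a + r) ^ 2 + b ^ 2) + l * r) :
    D ≤ G + √(L ^ 2 - l ^ 2) * b - l * a := by
  set σ := √(L ^ 2 - l ^ 2)
  have hσsq : σ ^ 2 = L ^ 2 - l ^ 2 := sq_sqrt_sq_sub_sq hl hlL
  have hL : 0 < L := by linarith
  have hsqrt : √((-l * b / σ) ^ 2 + b ^ 2) = L * b / σ := by
    rw [Real.sqrt_eq_iff_mul_self_eq (by positivity) (by positivity)]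
    field_simp
    linear_combination b ^ 2 * hσsq
  have := h (-l * b / σ - a) (by linarith)
  rw [add_sub_cancel, hsqrt] at this
  calc D ≤ _ := this
    _ = G + σ * b - l * a := by field_simp; linear_combination (-b) * hσsq

-- For `L = -l` the infimum over `r` is only approached as `r → ∞`.
theorem le_zero_of_forall_le_add_sqrt (hl : l < 0) (hlL : L = -l) (hLa : G + L * a = 0)
    (h : ∀ r ≥ 0, D ≤ G + L * √((a + r) ^ 2 + b ^ 2) + l * r) : D ≤ 0 := by
  have hL : 0 < L := by linarith
  have hlim : Tendsto (fun r => L * b ^ 2 / (a + r)) atTop (𝓝 0) :=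
    tendsto_const_nhds.div_atTop (tendsto_atTop_add_const_left _ _ tendsto_id)
  refine ge_of_tendsto hlim ?_
  filter_upwards [eventually_ge_atTop (|a| + 1)] with r hr
  have ht : 0 < a + r := by linarith [neg_abs_le a]
  have hsqrt : √((a + r) ^ 2 + b ^ 2) ≤ a + r + b ^ 2 / (a + r) := by
    rw [Real.sqrt_le_iff]
    refine ⟨by positivity, ?_⟩
    have : 0 ≤ (b ^ 2 / (a + r)) ^ 2 := sq_nonneg _
    have : (a + r) * (b ^ 2 / (a + r)) = b ^ 2 := mul_div_cancel₀ _ ht.ne'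
    nlinarith
  calc D ≤ G + L * √((a + r) ^ 2 + b ^ 2) + l * r := h r (by linarith [abs_nonneg a])
    _ ≤ G + L * (a + r + b ^ 2 / (a + r)) + l * r := by gcongr
    _ = L * b ^ 2 / (a + r) := by rw [hlL] at hLa ⊢; linear_combination hLa

theorem le_of_le_add_sqrt_of_lt (hl : l < 0) (hlL : -l ≤ L) (hW : 0 ≤ W)
    (hWG : -l * W < √(L ^ 2 - l ^ 2) * -G)
    (hD : D ≤ G + L * √((l / L ^ 2 * G) ^ 2 + (l / L ^ 2 * W) ^ 2)) :
    D ≤ √(L ^ 2 - l ^ 2) / L * √(G ^ 2 + W ^ 2) := by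
  set σ := √(L ^ 2 - l ^ 2)
  have hσsq : σ ^ 2 = L ^ 2 - l ^ 2 := sq_sqrt_sq_sub_sq hl hlL
  have hσ0 : 0 ≤ σ := Real.sqrt_nonneg _
  have hL : 0 < L := by linarith
  have hS : √(G ^ 2 + W ^ 2) ^ 2 = G ^ 2 + W ^ 2 := Real.sq_sqrt (by positivity)
  have hS0 : 0 ≤ √(G ^ 2 + W ^ 2) := Real.sqrt_nonneg _
  have hsqrt : √((l / L ^ 2 * G) ^ 2 + (l / L ^ 2 * W) ^ 2)
      = -l / L ^ 2 * √(G ^ 2 + W ^ 2) := by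
    rw [Real.sqrt_eq_iff_mul_self_eq (by positivity)
      (mul_nonneg (div_nonneg (by linarith) (sq_nonneg L)) hS0)]
    linear_combination (-(l / L ^ 2) ^ 2) * hS
  rw [hsqrt] at hD
  have hG : 0 < -G := by nlinarith [mul_nonneg (neg_nonneg.2 hl.le) hW]
  have hSG : -l * √(G ^ 2 + W ^ 2) < L * -G := by
    refine lt_of_pow_lt_pow_left₀ 2 (by positivity) ?_
    nlinarith [mul_nonneg (neg_nonneg.2 hl.le) hW]
  calc D ≤ _ := hD
    _ = (L * G - l * √(G ^ 2 + W ^ 2)) / L := by field_simp; ring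
    _ ≤ σ / L * √(G ^ 2 + W ^ 2) := by
      rw [div_mul_eq_mul_div]
      gcongr
      nlinarith [mul_nonneg hσ0 hS0]

theorem le_of_forall_le_add_sqrt (hl : l < 0) (hlL : -l ≤ L) (hW : 0 ≤ W)
    (h : ∀ r ≥ 0, D ≤ G + L * √((l / L ^ 2 * G + r) ^ 2 + (l / L ^ 2 * W) ^ 2) + l * r) :
    D ≤ √(L ^ 2 - l ^ 2) / L * √(G ^ 2 + W ^ 2) := by
  set σ := √(L ^ 2 - l ^ 2)
  have hσsq : σ ^ 2 = L ^ 2 - l ^ 2 := sq_sqrt_sq_sub_sq hl hlL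
  have hL : 0 < L := by linarith
  obtain hσ0 | hσ0 := (show 0 ≤ σ from Real.sqrt_nonneg _).eq_or_lt
  · have hLl : L = -l := by nlinarith
    rw [← hσ0, zero_div, zero_mul]
    refine le_zero_of_forall_le_add_sqrt hl hLl ?_ h
    field_simp
    rw [hLl]; ring
  by_cases ha : l / L ^ 2 * G ≤ -l * -(l / L ^ 2 * W) / σ
  · simp only [← neg_sq (l / L ^ 2 * W)] at h
    have hD := le_of_forall_le_add_sqrt_of_le hl hlL hσ0 (by
      have : l / L ^ 2 ≤ 0 := div_nonpos_of_nonpos_of_nonneg hl.le (sq_nonneg L)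
      nlinarith) ha h
    have hS : √(G ^ 2 + W ^ 2) ^ 2 = G ^ 2 + W ^ 2 := Real.sq_sqrt (by positivity)
    -- Cauchy–Schwarz for `(σ, -l)` and `(G, W)`, as `σ² + l² = L²`
    have hCS : σ * G - l * W ≤ L * √(G ^ 2 + W ^ 2) :=
      le_of_sq_le_sq (by nlinarith [sq_nonneg (σ * W + l * G)]) (by positivity)
    calc D ≤ _ := hD
      _ = σ * (σ * G - l * W) / L ^ 2 := by field_simp; linear_combination (-G) * hσsq
      _ ≤ σ * (L * √(G ^ 2 + W ^ 2)) / L ^ 2 := by gcongr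
      _ = σ / L * √(G ^ 2 + W ^ 2) := by field_simp
  · refine le_of_le_add_sqrt_of_lt hl hlL hW ?_ (by simpa using h 0 le_rfl)
    rw [not_le, div_lt_iff₀ hσ0] at ha
    field_simp at ha
    nlinarith

end Scalar

section SetValued

variable {E : Type*} [NormedAddCommGroup E]

def IsHausdorffLipschitz (F : E → Set E) (L : ℝ) : Prop :=
  ∀ x x', hausdorffDist (F x) (F x') ≤ L * ‖x - x'‖

theorem IsHausdorffLipschitz.exists_dist_le {F : E → Set E} {L : ℝ}
    (hF : IsHausdorffLipschitz F L) (hne : ∀ x, (F x).Nonempty) (hcp : ∀ x, IsCompact (F x))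
    {x p : E} (hp : p ∈ F x) (x' : E) : ∃ y ∈ F x', dist p y ≤ L * ‖x' - x‖ := by
  obtain ⟨y, hy, hpy⟩ := (hcp x').exists_infDist_eq_dist (hne x') p
  refine ⟨y, hy, hpy ▸ ?_⟩
  calc infDist p (F x') ≤ hausdorffDist (F x) (F x') :=
        infDist_le_hausdorffDist_of_mem hp <| hausdorffEDist_ne_top_of_nonempty_of_bounded
          (hne x) (hne x') (hcp x).isBounded (hcp x').isBounded
    _ ≤ L * ‖x' - x‖ := norm_sub_rev x x' ▸ hF x x'

variable [InnerProductSpace ℝ E]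

def IsRelaxedOneSidedLipschitz (F : E → Set E) (l : ℝ) : Prop :=
  ∀ x x', ∀ y ∈ F x, ∃ y' ∈ F x', ⟪y - y', x - x'⟫ ≤ l * ‖x - x'‖ ^ 2

theorem norm_smul_add_smul_sq {d : E} (hd : ‖d‖ = 1) (v : E) (c r : ℝ) :
    ‖c • v + r • d‖ ^ 2 = (c * ⟪v, d⟫ + r) ^ 2 + (c * ‖v - ⟪v, d⟫ • d‖) ^ 2 := by
  rw [mul_pow c, norm_add_sq_real, norm_sub_sq_real, norm_smul, norm_smul, norm_smul, hd,
    inner_smul_left, inner_smul_right, inner_smul_right, real_inner_comm d v]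
  simp only [conj_trivial, Real.norm_eq_abs, mul_pow, sq_abs]
  ring

theorem IsRelaxedOneSidedLipschitz.exists_inner_le {F : E → Set E} {l : ℝ}
    (hF : IsRelaxedOneSidedLipschitz F l) {x d y : E} (hd : ‖d‖ = 1) {r : ℝ} (hr : 0 ≤ r)
    (hy : y ∈ F (x + r • d)) : ∃ k ∈ F x, ⟪y - k, d⟫ ≤ l * r := by
  obtain rfl | hr := hr.eq_or_lt
  · exact ⟨y, by simpa using hy, by simp⟩
  obtain ⟨k, hk, hyk⟩ := hF _ x y hy
  refine ⟨k, hk, le_of_mul_le_mul_left ?_ hr⟩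
  rw [add_sub_cancel_left, inner_smul_right, norm_smul, hd, Real.norm_of_nonneg hr.le] at hyk
  linarith

theorem Convex.dist_le_inner_of_dist_eq_infDist {K : Set E} (hK : Convex ℝ K) {y q k : E}
    (hq : q ∈ K) (hqy : dist y q = infDist y K) (hk : k ∈ K) :
    dist y q ≤ ⟪y - k, ‖y - q‖⁻¹ • (y - q)⟫ := by
  obtain rfl | hyq := eq_or_ne y q
  · simp
  have hproj : ⟪y - q, k - q⟫ ≤ 0 := by
    refine (norm_eq_iInf_iff_real_inner_le_zero hK hq).1 ?_ k hk
    simpa only [dist_eq_norm, infDist_eq_iInf] using hqy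
  have hpos : 0 < ‖y - q‖ := norm_pos_iff.2 (sub_ne_zero.2 hyq)
  rw [inner_smul_right, dist_eq_norm, le_inv_mul_iff₀ hpos,
    show y - k = (y - q) - (k - q) by abel, inner_sub_left, real_inner_self_eq_norm_mul_norm,
    real_inner_comm]
  linarith

variable {F : E → Set E} {l L : ℝ}

theorem IsRelaxedOneSidedLipschitz.le_inner_add_of_forall_le_inner
    (hrosl : IsRelaxedOneSidedLipschitz F l) (hlip : IsHausdorffLipschitz F L)
    (hne : ∀ x, (F x).Nonempty) (hcp : ∀ x, IsCompact (F x)) {x₀ x₁ y p d : E} {D r : ℝ}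
    (hp : p ∈ F x₀) (hd : ‖d‖ = 1) (hD : ∀ k ∈ F x₁, D ≤ ⟪y - k, d⟫) (hr : 0 ≤ r) :
    D ≤ ⟪y - p, d⟫ + L * ‖x₁ + r • d - x₀‖ + l * r := by
  obtain ⟨y', hy', hpy'⟩ := hlip.exists_dist_le hne hcp hp (x₁ + r • d)
  obtain ⟨k, hk, hy'k⟩ := hrosl.exists_inner_le hd hr hy'
  have hpy'_inner : ⟪p - y', d⟫ ≤ dist p y' := by
    simpa [hd, dist_eq_norm] using real_inner_le_norm (p - y') d
  calc D ≤ ⟪y - k, d⟫ := hD k hk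
    _ = ⟪y - p, d⟫ + ⟪p - y', d⟫ + ⟪y' - k, d⟫ := by
      rw [← inner_add_left, ← inner_add_left, sub_add_sub_cancel, sub_add_sub_cancel]
    _ ≤ _ := by linarith

theorem IsRelaxedOneSidedLipschitz.infDist_add_smul_le (hrosl : IsRelaxedOneSidedLipschitz F l)
    (hlip : IsHausdorffLipschitz F L) (hne : ∀ x, (F x).Nonempty) (hcp : ∀ x, IsCompact (F x))
    (hcv : ∀ x, Convex ℝ (F x)) (hl : l < 0) (hlL : -l ≤ L) {x y p : E} (hp : p ∈ F x)
    (hpy : dist y p = infDist y (F x)) :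
    infDist y (F (x + (l / L ^ 2) • (y - p))) ≤ √(L ^ 2 - l ^ 2) / L * infDist y (F x) := by
  set x₁ := x + (l / L ^ 2) • (y - p)
  obtain ⟨q, hq, hqy⟩ := (hcp x₁).exists_infDist_eq_dist (hne x₁) y
  obtain rfl | hyq := eq_or_ne y q
  · rw [hqy, dist_self]
    exact mul_nonneg (div_nonneg (Real.sqrt_nonneg _) (by linarith)) infDist_nonneg
  set d := ‖y - q‖⁻¹ • (y - q)
  have hd : ‖d‖ = 1 := norm_smul_inv_norm (sub_ne_zero.2 hyq)
  have hv := norm_smul_add_smul_sq hd (y - p) 1 0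
  simp only [one_smul, zero_smul, add_zero, one_mul] at hv
  rw [hqy, ← hpy, dist_eq_norm y p, ← Real.sqrt_sq (norm_nonneg (y - p)), hv]
  refine le_of_forall_le_add_sqrt hl hlL (norm_nonneg _) fun r hr => ?_
  rw [← norm_smul_add_smul_sq hd, Real.sqrt_sq (norm_nonneg _)]
  have := hrosl.le_inner_add_of_forall_le_inner hlip hne hcp hp hd
    (fun k hk => (hcv x₁).dist_le_inner_of_dist_eq_infDist hq hqy.symm hk) hr
  rwa [show x₁ + r • d - x = (l / L ^ 2) • (y - p) + r • d by simp only [x₁]; abel] at this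

end SetValued

theorem mem_of_tendsto_of_forall_infDist_lt {α β ι : Type*} [PseudoMetricSpace α]
    [PseudoMetricSpace β] {F : α → Set β} {x₀ : α} {y : β}
    (husc : ∀ ε > 0, ∃ δ > 0, ∀ x', dist x' x₀ < δ → ∀ y ∈ F x', infDist y (F x₀) < ε)
    (hcl : IsClosed (F x₀)) (hne : (F x₀).Nonempty) {f : Filter ι} [f.NeBot] {x : ι → α}
    {p : ι → β} (hx : Tendsto x f (𝓝 x₀)) (hp : ∀ n, p n ∈ F (x n))
    (hpy : Tendsto p f (𝓝 y)) : y ∈ F x₀ := by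
  rw [hcl.mem_iff_infDist_zero hne]
  have hp₀ : Tendsto (fun n => infDist (p n) (F x₀)) f (𝓝 0) := by
    refine Metric.tendsto_nhds.2 fun ε hε => ?_
    obtain ⟨δ, hδ, h⟩ := husc ε hε
    filter_upwards [Metric.tendsto_nhds.1 hx δ hδ] with n hn
    rw [Real.dist_0_eq_abs, abs_of_nonneg infDist_nonneg]
    exact h _ hn _ (hp n)
  exact tendsto_nhds_unique (((continuous_infDist_pt _).tendsto y).comp hpy) hp₀

theorem cauchySeq_of_add_smul_of_norm_le_geometric {E : Type*} [SeminormedAddCommGroup E]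
    [NormedSpace ℝ E] {x v : ℕ → E} {c C κ : ℝ} (hκ : κ < 1)
    (hx : ∀ n, x (n + 1) = x n + c • v n) (hv : ∀ n, ‖v n‖ ≤ C * κ ^ n) : CauchySeq x :=
  cauchySeq_of_le_geometric κ (|c| * C) hκ fun n => by
    rw [hx n, dist_self_add_right, norm_smul, Real.norm_eq_abs, mul_assoc]
    exact mul_le_mul_of_nonneg_left (hv n) (abs_nonneg c)

theorem stmt_17_general {d : ℕ}
    (F : EuclideanSpace ℝ (Fin d) → Set (EuclideanSpace ℝ (Fin d)))
    (hne : ∀ x, (F x).Nonempty) (hcp : ∀ x, IsCompact (F x)) (hcv : ∀ x, Convex ℝ (F x))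
    (husc : ∀ x, ∀ ε > 0, ∃ δ > 0, ∀ x', dist x' x < δ →
      ∀ y ∈ F x', Metric.infDist y (F x) < ε)
    (l L : ℝ) (hl : l < 0) (hlL : -l ≤ L)
    (hrosl : ∀ x x', ∀ y ∈ F x, ∃ y' ∈ F x',
      ⟪y - y', x - x'⟫ ≤ l * ‖x - x'‖ ^ 2)
    (hlip : ∀ x x', Metric.hausdorffDist (F x) (F x') ≤ L * ‖x - x'‖)
    (yb : EuclideanSpace ℝ (Fin d))
    (x p : ℕ → EuclideanSpace ℝ (Fin d))
    (hp : ∀ n, p n ∈ F (x n) ∧ dist yb (p n) = Metric.infDist yb (F (x n)))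
    (hx : ∀ n, x (n + 1) = x n + (l / L ^ 2) • (yb - p n)) :
    (∀ n, Metric.infDist yb (F (x (n + 1))) ≤
        (Real.sqrt (L ^ 2 - l ^ 2) / L) * Metric.infDist yb (F (x n))) ∧
    ∃ xb : EuclideanSpace ℝ (Fin d), yb ∈ F xb ∧ Tendsto x atTop (nhds xb) := by
  have hL : 0 < L := by linarith
  set κ := √(L ^ 2 - l ^ 2) / L
  have hstep : ∀ n, infDist yb (F (x (n + 1))) ≤ κ * infDist yb (F (x n)) := fun n =>
    hx n ▸ IsRelaxedOneSidedLipschitz.infDist_add_smul_le hrosl hlip hne hcp hcv hl hlL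
      (hp n).1 (hp n).2
  refine ⟨hstep, ?_⟩
  have hκ0 : 0 ≤ κ := div_nonneg (Real.sqrt_nonneg _) hL.le
  have hκ1 : κ < 1 := by
    rw [div_lt_one hL, Real.sqrt_lt' hL]
    nlinarith
  have hdist : ∀ n, dist yb (p n) ≤ infDist yb (F (x 0)) * κ ^ n := by
    intro n
    rw [(hp n).2, mul_comm]
    exact le_geom (u := fun n => infDist yb (F (x n))) hκ0 n fun k _ => hstep k
  obtain ⟨xb, hxb⟩ := cauchySeq_tendsto_of_complete <|
    cauchySeq_of_add_smul_of_norm_le_geometric hκ1 hx fun n => dist_eq_norm yb (p n) ▸ hdist n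
  have hpy : Tendsto p atTop (𝓝 yb) := by
    have hgeom := (tendsto_pow_atTop_nhds_zero_of_lt_one hκ0 hκ1).const_mul (infDist yb (F (x 0)))
    rw [mul_zero] at hgeom
    exact tendsto_iff_dist_tendsto_zero.2
      (squeeze_zero (fun _ => dist_nonneg) (fun n => dist_comm yb (p n) ▸ hdist n) hgeom)
  exact ⟨xb, mem_of_tendsto_of_forall_infDist_lt (husc xb) (hcp xb).isClosed (hne xb) hxb
    (fun n => (hp n).1) hpy, hxb⟩

theorem stmt_17 {d : ℕ} (hd : 1 < d)
    (F : EuclideanSpace ℝ (Fin d) → Set (EuclideanSpace ℝ (Fin d)))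
    (hne : ∀ x, (F x).Nonempty) (hcp : ∀ x, IsCompact (F x)) (hcv : ∀ x, Convex ℝ (F x))
    (husc : ∀ x, ∀ ε > 0, ∃ δ > 0, ∀ x', dist x' x < δ →
      ∀ y ∈ F x', Metric.infDist y (F x) < ε)
    (l L : ℝ) (hl : l < 0) (hlL : -l ≤ L) (hL : L ≤ -(Real.sqrt 2 * l))
    (hrosl : ∀ x x', ∀ y ∈ F x, ∃ y' ∈ F x',
      ⟪y - y', x - x'⟫ ≤ l * ‖x - x'‖ ^ 2)
    (hlip : ∀ x x', Metric.hausdorffDist (F x) (F x') ≤ L * ‖x - x'‖)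
    (yb : EuclideanSpace ℝ (Fin d))
    (x p : ℕ → EuclideanSpace ℝ (Fin d))
    (hp : ∀ n, p n ∈ F (x n) ∧ dist yb (p n) = Metric.infDist yb (F (x n)))
    (hx : ∀ n, x (n + 1) = x n + (l / L ^ 2) • (yb - p n)) :
    (∀ n, Metric.infDist yb (F (x (n + 1))) ≤
        (Real.sqrt (L ^ 2 - l ^ 2) / L) * Metric.infDist yb (F (x n))) ∧
    ∃ xb : EuclideanSpace ℝ (Fin d), yb ∈ F xb ∧ Tendsto x atTop (nhds xb) :=
  stmt_17_general F hne hcp hcv husc l L hl hlL hrosl hlip yb x p hp hx
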